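/- Let μ, δ ∈ (0, π/2) with μ < δ, and μ* ∈ (μ, π/2). Define F(y) = (y cos μ* cot μ + sin μ*)/√(1 + (1−y²)cot²δ + y² cot²μ) for y ∈ [0,1]. Then F attains its maximum on [0, ∞) at y_M = cot μ · cos μ* · (1 + cot²δ) / (sin μ* · (cot²μ − cot²δ)), and F is increasing on [0, y_M]. -/

import Mathlib

/-!
With `a = cot μ`, `b = cot δ` the function is `F y = (u * y + s) / √(A + B * y ^ 2)` with
`u = a cos μ*`, `s = sin μ* > 0`, `A = 1 + b² > 0` and `B = a² - b² > 0`. Its derivative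
`(u * A - s * B * y) / (A + B * y ^ 2) ^ (3 / 2)` changes sign only at `y = u * A / (s * B) = y_M`,
so `F` increases up to `y_M` and decreases after it.
-/

open Real Set

namespace Real

theorem cot_lt_cot_of_lt {x y : ℝ} (hx : 0 < x) (hxy : x < y) (hy : y < π / 2) :
    cot y < cot x := by
  rw [cot_eq_cos_div_sin, cot_eq_cos_div_sin, ← inv_div (sin y), ← inv_div (sin x),
    ← tan_eq_sin_div_cos, ← tan_eq_sin_div_cos]
  exact inv_strictAnti₀ (tan_pos_of_pos_of_lt_pi_div_two hx (hxy.trans hy))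
    (tan_lt_tan_of_lt_of_lt_pi_div_two (by linarith) hy hxy)

end Real

section AffineDivSqrt

variable {u s A B : ℝ}

theorem hasDerivAt_affine_div_sqrt {y : ℝ} (hQ : 0 < A + B * y ^ 2) :
    HasDerivAt (fun y => (u * y + s) / √(A + B * y ^ 2))
      ((u * A - s * B * y) / ((A + B * y ^ 2) * √(A + B * y ^ 2))) y := by
  have hN : HasDerivAt (fun y => u * y + s) u y := by
    simpa using ((hasDerivAt_id y).const_mul u).add_const s
  have hQ' : HasDerivAt (fun y => A + B * y ^ 2) (B * (2 * y)) y := by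
    simpa using ((hasDerivAt_pow 2 y).const_mul B).const_add A
  refine (hN.div (hQ'.sqrt hQ.ne') (sqrt_pos.2 hQ).ne').congr_deriv ?_
  have hsq := sq_sqrt hQ.le
  field_simp
  rw [hsq]
  ring

theorem differentiable_affine_div_sqrt (hA : 0 < A) (hB : 0 ≤ B) :
    Differentiable ℝ (fun y => (u * y + s) / √(A + B * y ^ 2)) := fun _ =>
  (hasDerivAt_affine_div_sqrt (by positivity)).differentiableAt

theorem monotoneOn_affine_div_sqrt (hA : 0 < A) (hB : 0 < B) (hs : 0 < s) :
    MonotoneOn (fun y => (u * y + s) / √(A + B * y ^ 2)) (Iic (u * A / (s * B))) := by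
  have hd := differentiable_affine_div_sqrt (u := u) (s := s) hA hB.le
  refine monotoneOn_of_deriv_nonneg (convex_Iic _) hd.continuous.continuousOn
    hd.differentiableOn fun y hy => ?_
  rw [interior_Iic, mem_Iio, lt_div_iff₀ (by positivity)] at hy
  rw [(hasDerivAt_affine_div_sqrt (by positivity)).deriv]
  exact div_nonneg (by linarith) (by positivity)

theorem antitoneOn_affine_div_sqrt (hA : 0 < A) (hB : 0 < B) (hs : 0 < s) :
    AntitoneOn (fun y => (u * y + s) / √(A + B * y ^ 2)) (Ici (u * A / (s * B))) := by
  have hd := differentiable_affine_div_sqrt (u := u) (s := s) hA hB.le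
  refine antitoneOn_of_deriv_nonpos (convex_Ici _) hd.continuous.continuousOn
    hd.differentiableOn fun y hy => ?_
  rw [interior_Ici, mem_Ioi, div_lt_iff₀ (by positivity)] at hy
  rw [(hasDerivAt_affine_div_sqrt (by positivity)).deriv]
  exact div_nonpos_of_nonpos_of_nonneg (by linarith) (by positivity)

theorem isMaxOn_affine_div_sqrt (hA : 0 < A) (hB : 0 < B) (hs : 0 < s) :
    IsMaxOn (fun y => (u * y + s) / √(A + B * y ^ 2)) univ (u * A / (s * B)) := by
  intro y _
  rcases le_total y (u * A / (s * B)) with hy | hy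
  · exact monotoneOn_affine_div_sqrt hA hB hs hy self_mem_Iic hy
  · exact antitoneOn_affine_div_sqrt hA hB hs self_mem_Ici hy hy

end AffineDivSqrt

open Real in
theorem stmt13 (μ μs δ : ℝ)
    (hμ0 : 0 < μ) (hμδ : μ < δ) (hδ : δ < π / 2) (hμs1 : μ < μs) (hμs2 : μs < π / 2) :
    let cot : ℝ → ℝ := fun x => Real.cos x / Real.sin x
    let F : ℝ → ℝ := fun y =>
      (y * Real.cos μs * cot μ + Real.sin μs) /
        Real.sqrt (1 + (1 - y ^ 2) * cot δ ^ 2 + y ^ 2 * cot μ ^ 2)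
    let yM : ℝ := cot μ * Real.cos μs * (1 + cot δ ^ 2) /
      (Real.sin μs * (cot μ ^ 2 - cot δ ^ 2))
    IsMaxOn F (Set.Ici 0) yM ∧ MonotoneOn F (Set.Icc 0 yM) := by
  intro cot F yM
  have hcot_δ_pos : 0 < cot δ :=
    div_pos (cos_pos_of_mem_Ioo ⟨by linarith, hδ⟩)
      (sin_pos_of_pos_of_lt_pi (by linarith) (by linarith))
  have hcot_lt : cot δ < cot μ := by
    simpa only [cot_eq_cos_div_sin] using cot_lt_cot_of_lt hμ0 hμδ hδ
  have hA : 0 < 1 + cot δ ^ 2 := by positivity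
  have hB : 0 < cot μ ^ 2 - cot δ ^ 2 := by nlinarith
  have hs : 0 < sin μs := sin_pos_of_pos_of_lt_pi (by linarith) (by linarith)
  have hF : F = fun y => (cot μ * cos μs * y + sin μs) /
      √(1 + cot δ ^ 2 + (cot μ ^ 2 - cot δ ^ 2) * y ^ 2) := by
    funext y
    simp only [F]
    ring_nf
  rw [hF]
  exact ⟨(isMaxOn_affine_div_sqrt hA hB hs).on_subset (subset_univ _),
    (monotoneOn_affine_div_sqrt hA hB hs).mono Icc_subset_Iic_self⟩
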